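/- For positive integers d, n, a, the number of partitions with perimeter n into d-distinct parts all ≥ a is at most the number of partitions with perimeter n+1 into d-distinct parts all ≥ a. -/

import Mathlib

/-!
Raising the largest part by one maps partitions of perimeter `n` injectively to partitions of
perimeter `n + 1`, keeping consecutive differences at least `d` and all parts at least `a`.
The target is finite since a partition of perimeter `n + 1` has at most `n + 1` parts, each at
most `n + 1`.
-/

/-- A partition: a nonempty, nonincreasing list of positive integers. -/
def IsPartition (l : List ℕ) : Prop :=
  l ≠ [] ∧ l.Pairwise (· ≥ ·) ∧ ∀ x ∈ l, 0 < x

/-- Perimeter: (largest part) + (number of parts) - 1. -/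
def perimeter (l : List ℕ) : ℕ := l.headI + l.length - 1

/-- d-distinct: consecutive parts differ by at least d. -/
def DDistinct (d : ℕ) (l : List ℕ) : Prop := l.Chain' (fun x y => y + d ≤ x)

lemma List.finite_setOf_length_le_forall_lt (k m : ℕ) :
    {l : List ℕ | l.length ≤ k ∧ ∀ x ∈ l, x < m}.Finite := by
  refine ((List.finite_length_le (Fin m) k).image (List.map Fin.val)).subset ?_
  rintro l ⟨hk, hm⟩
  lift l to List (Fin m) using hm
  exact ⟨l, by simpa using hk, rfl⟩

namespace IsPartition

variable {l : List ℕ}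

lemma length_le_perimeter (hl : IsPartition l) : l.length ≤ perimeter l := by
  obtain ⟨hne, -, hpos⟩ := hl
  obtain ⟨h, t, rfl⟩ := List.exists_cons_of_ne_nil hne
  have := hpos h List.mem_cons_self
  simp only [perimeter, List.headI_cons, List.length_cons]
  omega

lemma le_perimeter (hl : IsPartition l) {x : ℕ} (hx : x ∈ l) : x ≤ perimeter l := by
  obtain ⟨hne, hsort, -⟩ := hl
  obtain ⟨h, t, rfl⟩ := List.exists_cons_of_ne_nil hne
  have hxh : x ≤ h := by
    rcases List.mem_cons.mp hx with rfl | hx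
    exacts [le_rfl, List.rel_of_pairwise_cons hsort hx]
  simp only [perimeter, List.headI_cons, List.length_cons]
  omega

lemma modifyHead_succ (hl : IsPartition l) : IsPartition (l.modifyHead (· + 1)) := by
  obtain ⟨hne, hsort, hpos⟩ := hl
  obtain ⟨h, t, rfl⟩ := List.exists_cons_of_ne_nil hne
  obtain ⟨hht, hsort⟩ := List.pairwise_cons.mp hsort
  refine ⟨List.cons_ne_nil _ _,
    List.pairwise_cons.mpr ⟨fun x hx => (hht x hx).trans h.le_succ, hsort⟩, ?_⟩
  simp only [List.modifyHead_cons, List.forall_mem_cons] at hpos ⊢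
  exact ⟨h.succ_pos, hpos.2⟩

end IsPartition

lemma finite_setOf_isPartition_perimeter_eq (n : ℕ) :
    {l : List ℕ | IsPartition l ∧ perimeter l = n}.Finite :=
  (List.finite_setOf_length_le_forall_lt n (n + 1)).subset fun _ ⟨hl, hn⟩ =>
    ⟨hn ▸ hl.length_le_perimeter, fun _ hx => Nat.lt_succ_of_le (hn ▸ hl.le_perimeter hx)⟩

lemma perimeter_modifyHead_succ {l : List ℕ} (hl : l ≠ []) :
    perimeter (l.modifyHead (· + 1)) = perimeter l + 1 := by
  obtain ⟨h, t, rfl⟩ := List.exists_cons_of_ne_nil hl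
  simp only [perimeter, List.modifyHead_cons, List.headI_cons, List.length_cons]
  omega

lemma DDistinct.modifyHead_succ {d : ℕ} {l : List ℕ} (hl : DDistinct d l) :
    DDistinct d (l.modifyHead (· + 1)) := by
  rcases l with _ | ⟨h, _ | ⟨b, t⟩⟩
  · exact hl
  · exact List.isChain_singleton _
  · obtain ⟨hhb, hbt⟩ := List.isChain_cons_cons.mp hl
    exact List.isChain_cons_cons.mpr ⟨Nat.le_succ_of_le hhb, hbt⟩

lemma List.forall_mem_modifyHead_succ {a : ℕ} {l : List ℕ} (hl : ∀ x ∈ l, a ≤ x) :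
    ∀ x ∈ l.modifyHead (· + 1), a ≤ x := by
  rcases l with _ | ⟨h, t⟩
  · exact hl
  · simp only [List.modifyHead_cons, List.forall_mem_cons] at hl ⊢
    exact ⟨hl.1.trans h.le_succ, hl.2⟩

lemma List.modifyHead_injective {α : Type*} {f : α → α} (hf : f.Injective) :
    (List.modifyHead f).Injective := by
  rintro (_ | ⟨a, l⟩) (_ | ⟨b, m⟩) h <;> simp_all [hf.eq_iff]

theorem stmt13_general (d n a : ℕ) :
    Nat.card {l : List ℕ // IsPartition l ∧ perimeter l = n ∧ DDistinct d l ∧ ∀ x ∈ l, a ≤ x}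
      ≤ Nat.card {l : List ℕ // IsPartition l ∧ perimeter l = n + 1 ∧ DDistinct d l ∧
          ∀ x ∈ l, a ≤ x} := by
  change Nat.card (Set.ofPred _) ≤ Nat.card (Set.ofPred _)
  rw [Nat.card_coe_set_eq, Nat.card_coe_set_eq]
  refine Set.ncard_le_ncard_of_injOn (List.modifyHead (· + 1)) ?_
    (List.modifyHead_injective (add_left_injective 1)).injOn
    ((finite_setOf_isPartition_perimeter_eq (n + 1)).subset fun l hl => ⟨hl.1, hl.2.1⟩)
  rintro l ⟨hl, hper, hdd, hla⟩
  exact ⟨hl.modifyHead_succ, by rw [perimeter_modifyHead_succ hl.1, hper], hdd.modifyHead_succ,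
    List.forall_mem_modifyHead_succ hla⟩

theorem stmt13 (d n a : ℕ) (hd : 0 < d) (hn : 0 < n) (ha : 0 < a) :
    Nat.card {l : List ℕ // IsPartition l ∧ perimeter l = n ∧ DDistinct d l ∧ ∀ x ∈ l, a ≤ x}
      ≤ Nat.card {l : List ℕ // IsPartition l ∧ perimeter l = n + 1 ∧ DDistinct d l ∧
          ∀ x ∈ l, a ≤ x} :=
  stmt13_general d n a
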